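/- If H is a snipped subgraph of a simple graph G (i.e., a quotient graph of a subgraph of G), then J(H) is isomorphic to a subgraph of J(G). -/

import Mathlib

open SimpleGraph

/-- The jump graph of `G`: the complement of the line graph. Vertices are edges of `G`,
adjacent iff the corresponding edges of `G` share no endpoint. -/
def SimpleGraph.jumpGraph {V : Type*} (G : SimpleGraph V) : SimpleGraph G.edgeSet :=
  (G.lineGraph)ᶜ

/-- A graph bundled with its vertex type. -/
def GraphBundle : Type 1 := Σ V : Type, SimpleGraph V

/-- The jump graph operation on bundled graphs, allowing iteration. -/
def jumpB (g : GraphBundle) : GraphBundle := ⟨↥g.2.edgeSet, g.2.jumpGraph⟩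

/-- Number of edges of a bundled graph. -/
noncomputable def edgeCount (g : GraphBundle) : ℕ := Nat.card g.2.edgeSet

/-- The quotient graph of `G` by a partition (setoid) of its vertices. -/
def quotGraph {V : Type*} (G : SimpleGraph V) (s : Setoid V) : SimpleGraph (Quotient s) where
  Adj x y := x ≠ y ∧ ∃ u v : V, Quotient.mk s u = x ∧ Quotient.mk s v = y ∧ G.Adj u v
  symm := ⟨by
    rintro x y ⟨hxy, u, v, hu, hv, h⟩
    exact ⟨hxy.symm, v, u, hv, hu, h.symm⟩⟩
  loopless := ⟨by
    rintro x ⟨h, -⟩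
    exact h rfl⟩

/-- `H` is a snipped subgraph of `G` : a quotient graph of a subgraph of `G`. -/
def IsSnippedSubgraph {W V : Type*} (H : SimpleGraph W) (G : SimpleGraph V) : Prop :=
  ∃ G' : SimpleGraph V, G' ≤ G ∧ ∃ s : Setoid V, Nonempty (H ≃g quotGraph G' s)

/-- The net graph: a triangle `0,1,2` with pendant vertices `3,4,5`. -/
def netGraph : SimpleGraph (Fin 6) :=
  SimpleGraph.fromEdgeSet {s(0,1), s(1,2), s(0,2), s(0,3), s(1,4), s(2,5)}

/-- Dissipation number: least `k` with `J^k(G)` the empty graph, as an extended natural. -/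
noncomputable def dissipationNumber (g : GraphBundle) : ℕ∞ :=
  sInf {k : ℕ∞ | ∃ n : ℕ, k = n ∧ IsEmpty (jumpB^[n] g).1}

lemma jump_adj' {V : Type*} {G : SimpleGraph V} {e₁ e₂ : G.edgeSet} :
    G.jumpGraph.Adj e₁ e₂ ↔ e₁ ≠ e₂ ∧ ∀ v, v ∈ (e₁ : Sym2 V) → v ∉ (e₂ : Sym2 V) := by
  rw [SimpleGraph.jumpGraph, SimpleGraph.compl_adj, SimpleGraph.lineGraph_adj_iff_exists]
  constructor
  · rintro ⟨hne, hor⟩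
    refine ⟨hne, fun v hv1 hv2 => ?_⟩
    push_neg at hor
    exact (hor hne) v hv1 hv2
  · rintro ⟨hne, hdisj⟩
    exact ⟨hne, fun hc => hdisj hc.2.choose hc.2.choose_spec.1 hc.2.choose_spec.2⟩

/-- If `H` is a snipped subgraph of `G`, then `J(H)` is isomorphic to a subgraph of `J(G)`. -/
theorem stmt2 {W V : Type*} (H : SimpleGraph W) (G : SimpleGraph V)
    (h : IsSnippedSubgraph H G) :
    ∃ f : H.jumpGraph →g G.jumpGraph, Function.Injective f := by
  obtain ⟨G', hle, s, ⟨φ⟩⟩ := h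
  have key : ∀ e : (quotGraph G' s).edgeSet, ∃ e' : G.edgeSet,
      Sym2.map (Quotient.mk s) (e' : Sym2 V) = (e : Sym2 (Quotient s)) := by
    rintro ⟨e, he⟩
    induction e using Sym2.inductionOn with
    | hf x y =>
      rw [SimpleGraph.mem_edgeSet] at he
      obtain ⟨hxy, u, v, hu, hv, huv⟩ := he
      exact ⟨⟨s(u, v), hle huv⟩, by simp [hu, hv]⟩
  choose g hg using key
  have hcoe : ∀ e : H.edgeSet, (φ.mapEdgeSet e : Sym2 (Quotient s)) = Sym2.map φ (e : Sym2 W) :=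
    fun e => rfl
  have hinj : Function.Injective fun e : H.edgeSet => g (φ.mapEdgeSet e) := by
    intro e₁ e₂ hgeq
    simp only at hgeq
    have : (φ.mapEdgeSet e₁ : Sym2 (Quotient s)) = (φ.mapEdgeSet e₂ : Sym2 (Quotient s)) := by
      rw [← hg (φ.mapEdgeSet e₁), ← hg (φ.mapEdgeSet e₂), hgeq]
    exact φ.mapEdgeSet.injective (Subtype.ext this)
  refine ⟨⟨fun e => g (φ.mapEdgeSet e), ?_⟩, hinj⟩
  intro e₁ e₂ hadj
  rw [jump_adj'] at hadj ⊢
  obtain ⟨hne, hdisj⟩ := hadj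
  refine ⟨fun hc => hne (hinj hc), ?_⟩
  intro v hv1 hv2
  -- push membership to the quotient edges
  have h1 : Quotient.mk s v ∈ (φ.mapEdgeSet e₁ : Sym2 (Quotient s)) := by
    rw [← hg (φ.mapEdgeSet e₁), Sym2.mem_map]
    exact ⟨v, hv1, rfl⟩
  have h2 : Quotient.mk s v ∈ (φ.mapEdgeSet e₂ : Sym2 (Quotient s)) := by
    rw [← hg (φ.mapEdgeSet e₂), Sym2.mem_map]
    exact ⟨v, hv2, rfl⟩
  rw [hcoe, Sym2.mem_map] at h1 h2
  obtain ⟨w₁, hw₁, hw₁'⟩ := h1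
  obtain ⟨w₂, hw₂, hw₂'⟩ := h2
  have : w₁ = w₂ := φ.injective (hw₁'.trans hw₂'.symm)
  exact hdisj w₁ hw₁ (this ▸ hw₂)
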